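/- Let P be a noncommutative polynomial in two variables and let P(a,a†) denote the operator on ℂ[[z]] (with coefficients extended over ℂ[[t,ℏ]]) obtained by substituting a = ℏ·d/dz and a† = multiplication by z. Set H₀ = a†a = ℏ z d/dz. Then for every n ∈ ℕ there exist a unique E ∈ ℂ[[t,ℏ]] and a unique ψ ∈ ℂ[[z,t,ℏ]] such that (a†a + ℏt·P(a,a†))ψ = Eψ, ψ|_{t=0} = zⁿ, and the coefficient of zⁿ in ψ equals 1; one has E|_{t=0} = nℏ, and moreover E = Σ_{i,k} α_{ik} tⁱ ℏᵏ is of Gevrey class in ℏ: both its ℏ-Borel transform Σ_{i, k≥1} α_{ik} tⁱ ℏ^{k-1}/(k-1)! and its ℏ-free part Σ_i α_{i0} tⁱ are convergent power series on a neighbourhood of 0 ∈ ℂ². (Gevrey convergence of the Rayleigh–Schrödinger expansions for polynomial perturbations of the harmonic oscillator.) -/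

import Mathlib

open scoped Classical

noncomputable section

variable {σ : Type*} [DecidableEq σ]

/-- Build a multivariate formal power series from its coefficient function. -/
def ofCoeff (g : (σ →₀ ℕ) → ℂ) : MvPowerSeries σ ℂ := g

/-- The total degree of a monomial exponent. -/
def degOf (d : σ →₀ ℕ) : ℕ := d.sum fun _ n => n

/-- A formal power series is convergent (has a positive polyradius of convergence) iff
its coefficients grow at most geometrically. -/
def IsConv (f : MvPowerSeries σ ℂ) : Prop :=
  ∃ C R : ℝ, 0 < R ∧ ∀ d : σ →₀ ℕ, ‖MvPowerSeries.coeff (R := ℂ) d f‖ ≤ C * R ^ degOf d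

/-- The Borel transform with respect to the variable `h` (thought of as `ℏ`):
`Σ a_k ℏ^k ↦ Σ_{k ≥ 1} a_k ℏ^{k-1}/(k-1)!`, i.e. the coefficient of `ℏ^j` in `Bf` is
`a_{j+1}/j!` (the other variables being spectators). -/
def hborel (h : σ) (f : MvPowerSeries σ ℂ) : MvPowerSeries σ ℂ :=
  ofCoeff fun d => (1 / (d h).factorial : ℂ) *
    MvPowerSeries.coeff (R := ℂ) (d + Finsupp.single h 1) f

/-- The `ℏ`-free part of a series: the sum of the monomials not involving `h`. -/
def hfree (h : σ) (f : MvPowerSeries σ ℂ) : MvPowerSeries σ ℂ :=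
  ofCoeff fun d => if d h = 0 then MvPowerSeries.coeff (R := ℂ) d f else 0

/-- `f` is Borel-analytic (of Gevrey class) with respect to the variable `h`:
its `ℏ`-Borel transform and its `ℏ`-free part are convergent power series. -/
def BorelAnalytic (h : σ) (f : MvPowerSeries σ ℂ) : Prop :=
  IsConv (hborel h f) ∧ IsConv (hfree h f)

/-- `f` depends only on the variables in `S`. -/
def DependsOnlyOn (f : MvPowerSeries σ ℂ) (S : Set σ) : Prop :=
  ∀ d : σ →₀ ℕ, (∃ i ∉ S, d i ≠ 0) → MvPowerSeries.coeff (R := ℂ) d f = 0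

/-- The formal partial derivative `∂_i`. -/
def pdF (i : σ) (f : MvPowerSeries σ ℂ) : MvPowerSeries σ ℂ :=
  ofCoeff fun d => ((d i : ℕ) + 1 : ℂ) *
    MvPowerSeries.coeff (R := ℂ) (d + Finsupp.single i 1) f

/-- The normal-ordered (total symbol) product of the Heisenberg algebra
`[a, a†] = ℏ`, with `x` the symbol of `a†`, `y` the symbol of `a` and `h` that of `ℏ`:
`f ⋆ g = Σ_k (ℏ^k/k!) (∂_y^k f)(∂_x^k g)`.  All remaining variables are central. -/
def nstar (x y h : σ) (f g : MvPowerSeries σ ℂ) : MvPowerSeries σ ℂ :=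
  ofCoeff fun d => ∑ k ∈ Finset.range (d h + 1),
    (1 / k.factorial : ℂ) *
      MvPowerSeries.coeff (R := ℂ) (d - Finsupp.single h k) ((pdF y)^[k] f * (pdF x)^[k] g)

/-- Iterated `⋆`-powers: `f^{⋆0} = 1`, `f^{⋆(m+1)} = f ⋆ f^{⋆m}`. -/
def nstarPow (x y h : σ) (f : MvPowerSeries σ ℂ) : ℕ → MvPowerSeries σ ℂ
  | 0 => 1
  | m + 1 => nstar x y h f (nstarPow x y h f m)

/-- The coefficient of `z^m` in `ψ` (a series in the central variables),
`z` being the variable `zv`. -/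
def zslice (zv : σ) (ψ : MvPowerSeries σ ℂ) (m : ℕ) : MvPowerSeries σ ℂ :=
  ofCoeff fun d => if d zv = 0 then
    MvPowerSeries.coeff (R := ℂ) (d + Finsupp.single zv m) ψ else 0

/-- Substitution `ψ ∘ f = Σ_m α_m ⋆ f^{⋆m}` of an element `f` (with vanishing constant
coefficient) into the series `ψ = Σ_m α_m z^m`, `z` being the variable `zv` and the
`α_m` series in the central variables. -/
def zsubst (x y h zv : σ) (ψ f : MvPowerSeries σ ℂ) : MvPowerSeries σ ℂ :=
  ofCoeff fun d => ∑' m : ℕ,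
    MvPowerSeries.coeff (R := ℂ) d (nstar x y h (zslice zv ψ m) (nstarPow x y h f m))

end

/-! Variables: `0 = z`, `1 = t`, `2 = ℏ`.  The space `ℂ[[z]]`, with coefficients
extended over `ℂ[[t,ℏ]]`, is realized as `ℂ[[z,t,ℏ]]`; the annihilation operator is
`a = ℏ d/dz` and the creation operator `a†` is multiplication by `z`. -/

/-- The formal partial derivative `∂_i`, as a `ℂ`-linear endomorphism. -/
noncomputable def pdL (i : Fin 3) :
    MvPowerSeries (Fin 3) ℂ →ₗ[ℂ] MvPowerSeries (Fin 3) ℂ :=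
  LinearMap.pi fun d : Fin 3 →₀ ℕ =>
    ((d i : ℕ) + 1 : ℂ) • MvPowerSeries.coeff (R := ℂ) (d + Finsupp.single i 1)

/-- The annihilation operator `a = ℏ d/dz` on `ℂ[[z,t,ℏ]]`. -/
noncomputable def aOp : Module.End ℂ (MvPowerSeries (Fin 3) ℂ) :=
  (LinearMap.mulLeft ℂ (MvPowerSeries.X 2 : MvPowerSeries (Fin 3) ℂ)).comp (pdL 0)

/-- The creation operator `a†`: multiplication by `z`. -/
noncomputable def adagOp : Module.End ℂ (MvPowerSeries (Fin 3) ℂ) :=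
  LinearMap.mulLeft ℂ (MvPowerSeries.X 0 : MvPowerSeries (Fin 3) ℂ)

/-- Substitution of `(a, a†)` into a noncommutative polynomial `P` in two variables
(an element of the free algebra on two generators, the first standing for `a`, the
second for `a†`). -/
noncomputable def substOps (P : FreeAlgebra ℂ (Fin 2)) :
    Module.End ℂ (MvPowerSeries (Fin 3) ℂ) :=
  FreeAlgebra.lift ℂ (fun i : Fin 2 => if i = 0 then aOp else adagOp) P

/-- The perturbed harmonic oscillator `H_t = a†a + ℏ t P(a,a†)` applied to `ψ`. -/
noncomputable def oscOp (P : FreeAlgebra ℂ (Fin 2)) (ψ : MvPowerSeries (Fin 3) ℂ) :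
    MvPowerSeries (Fin 3) ℂ :=
  adagOp (aOp ψ) +
    (MvPowerSeries.X 2 * MvPowerSeries.X 1 : MvPowerSeries (Fin 3) ℂ) * substOps P ψ

/-- The Rayleigh–Schrödinger eigenvalue problem for `H_t = a†a + ℏ t P(a,a†)` and the
`n`-th eigenvalue: `E ∈ ℂ[[t,ℏ]]`, `(a†a + ℏtP(a,a†))ψ = Eψ`, `ψ|_{t=0} = z^n`, and
the coefficient of `z^n` in `ψ` (a series in `t,ℏ`) equals `1`. -/
def RSCond (P : FreeAlgebra ℂ (Fin 2)) (n : ℕ)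
    (p : MvPowerSeries (Fin 3) ℂ × MvPowerSeries (Fin 3) ℂ) : Prop :=
  DependsOnlyOn p.1 {1, 2} ∧
  oscOp P p.2 = p.1 * p.2 ∧
  (∀ d : Fin 3 →₀ ℕ, d 1 = 0 →
    MvPowerSeries.coeff (R := ℂ) d p.2 = if d = Finsupp.single 0 n then 1 else 0) ∧
  (∀ d : Fin 3 →₀ ℕ, d 0 = n →
    MvPowerSeries.coeff (R := ℂ) d p.2 = if d = Finsupp.single 0 n then 1 else 0)

/-!
Write `ψ = Σ ψ_{m,i,k} z^m t^i ℏ^k` and `E = Σ E_{i,k} t^i ℏ^k`. Since `P(a, a†)` does not involve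
`t`, comparing coefficients turns the normalised eigenvalue problem into a recursion in the power of
`t`: level `i + 1` of `E` is `(Pψ)_{n,i}`, and level `i + 1` of `ψ` is a combination of lower levels
divided by `m - n`. This gives existence and uniqueness.

A word of length at most `L` in `a = ℏ ∂_z` and `a† = z` moves the `z`-degree by at most `L` and,
raising the `ℏ`-degree by `r`, multiplies coefficients by at most `(m + L)^r`. As level `i` of `ψ`
has `z`-degree at most `n + iL`, induction on `i` gives `|ψ_{m,i,k}| ≤ A^i c^k (i+1)^k w_i w_k`, the
weights `w_j = (j+1)^{-2}` absorbing the convolutions. Hence `|E_{i+1,k+1}| ≤ K A^i c^k (i+2)^k`,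
and since `(i+2)^k ≤ k! e^{i+2}`, the Borel transform of `E` converges.
-/

open MvPowerSeries Finset

noncomputable section

namespace RayleighSchrodinger

/-! ### Coefficients -/

abbrev Series := MvPowerSeries (Fin 3) ℂ

/-- The exponent of `z^m t^i ℏ^k`. -/
def mon (m i k : ℕ) : Fin 3 →₀ ℕ := Finsupp.equivFunOnFinite.symm ![m, i, k]

@[simp] lemma mon_apply_zero (m i k : ℕ) : mon m i k 0 = m := rfl
@[simp] lemma mon_apply_one (m i k : ℕ) : mon m i k 1 = i := rfl
@[simp] lemma mon_apply_two (m i k : ℕ) : mon m i k 2 = k := rfl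

lemma mon_eta (d : Fin 3 →₀ ℕ) : mon (d 0) (d 1) (d 2) = d := by
  ext j; fin_cases j <;> rfl

lemma mon_add (m i k m' i' k' : ℕ) :
    mon m i k + mon m' i' k' = mon (m + m') (i + i') (k + k') := by
  ext j; fin_cases j <;> rfl

lemma mon_inj {m i k m' i' k' : ℕ} : mon m i k = mon m' i' k' ↔ m = m' ∧ i = i' ∧ k = k' := by
  refine ⟨fun h => ⟨?_, ?_, ?_⟩, by rintro ⟨rfl, rfl, rfl⟩; rfl⟩
  · simpa using congr($h 0)
  · simpa using congr($h 1)
  · simpa using congr($h 2)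

lemma single_eq_mon (j : Fin 3) (a : ℕ) :
    Finsupp.single j a =
      mon (if j = 0 then a else 0) (if j = 1 then a else 0) (if j = 2 then a else 0) := by
  ext q; fin_cases q <;> fin_cases j <;> simp

lemma eq_single_iff (d : Fin 3 →₀ ℕ) (j : Fin 3) (a : ℕ) :
    d = Finsupp.single j a ↔ d 0 = (if j = 0 then a else 0) ∧ d 1 = (if j = 1 then a else 0) ∧
      d 2 = (if j = 2 then a else 0) := by
  conv_lhs => rw [← mon_eta d, single_eq_mon]
  exact mon_inj

lemma degOf_eq (d : Fin 3 →₀ ℕ) : degOf d = d 0 + d 1 + d 2 := by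
  rw [degOf, Finsupp.sum_fintype _ _ (fun _ => rfl), Fin.sum_univ_three]

def cf (m i k : ℕ) (f : Series) : ℂ := coeff (mon m i k) f

lemma coeff_eq_cf (d : Fin 3 →₀ ℕ) (f : Series) : coeff d f = cf (d 0) (d 1) (d 2) f := by
  rw [cf, mon_eta]

lemma ext_cf {f g : Series} (h : ∀ m i k, cf m i k f = cf m i k g) : f = g :=
  MvPowerSeries.ext fun d => by rw [coeff_eq_cf, coeff_eq_cf, h]

@[simp] lemma cf_add (m i k : ℕ) (f g : Series) : cf m i k (f + g) = cf m i k f + cf m i k g :=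
  map_add _ _ _

@[simp] lemma cf_sub (m i k : ℕ) (f g : Series) : cf m i k (f - g) = cf m i k f - cf m i k g :=
  map_sub _ _ _

@[simp] lemma cf_smul (m i k : ℕ) (c : ℂ) (f : Series) : cf m i k (c • f) = c * cf m i k f :=
  map_smul _ _ _

@[simp] lemma coeff_ofCoeff (g : (Fin 3 →₀ ℕ) → ℂ) (d : Fin 3 →₀ ℕ) :
    coeff d (ofCoeff g) = g d :=
  rfl

@[simp] lemma cf_ofCoeff (g : (Fin 3 →₀ ℕ) → ℂ) (m i k : ℕ) :
    cf m i k (ofCoeff g) = g (mon m i k) :=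
  rfl

lemma cf_monomial_mul_add (f : Series) (m i k a b c : ℕ) :
    cf (m + a) (i + b) (k + c) (monomial (mon a b c) 1 * f) = cf m i k f := by
  have hsub : mon (m + a) (i + b) (k + c) - mon a b c = mon m i k := by
    ext j; fin_cases j <;> simp [mon]
  have hle : mon a b c ≤ mon (m + a) (i + b) (k + c) := fun j => by fin_cases j <;> simp [mon]
  rw [cf, coeff_monomial_mul, if_pos hle, one_mul, hsub]
  rfl

lemma cf_monomial_mul_of_not_le (f : Series) {m i k a b c : ℕ} (h : ¬ (a ≤ m ∧ b ≤ i ∧ c ≤ k)) :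
    cf m i k (monomial (mon a b c) 1 * f) = 0 := by
  rw [cf, coeff_monomial_mul, if_neg]
  exact fun hle => h ⟨hle 0, hle 1, hle 2⟩

/-! ### The operators -/

lemma X_eq_monomial_mon (j : Fin 3) :
    (X j : Series) = monomial (mon (if j = 0 then 1 else 0) (if j = 1 then 1 else 0)
      (if j = 2 then 1 else 0)) 1 := by
  rw [← single_eq_mon]; rfl

lemma cf_adagOp_succ (f : Series) (m i k : ℕ) : cf (m + 1) i k (adagOp f) = cf m i k f := by
  simpa [adagOp, X_eq_monomial_mon] using cf_monomial_mul_add f m i k 1 0 0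

lemma cf_adagOp_zero (f : Series) (i k : ℕ) : cf 0 i k (adagOp f) = 0 := by
  change cf 0 i k (X 0 * f) = 0
  rw [X_eq_monomial_mon]; exact cf_monomial_mul_of_not_le f (by simp)

lemma cf_pdL_zero (f : Series) (m i k : ℕ) :
    cf m i k (pdL 0 f) = (m + 1) * cf (m + 1) i k f := by
  change ((mon m i k 0 : ℂ) + 1) * coeff (mon m i k + Finsupp.single 0 1) f = _
  rw [single_eq_mon]; simp [mon_add, cf]

lemma cf_aOp_succ (f : Series) (m i k : ℕ) :
    cf m i (k + 1) (aOp f) = (m + 1) * cf (m + 1) i k f := by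
  change cf m i (k + 1) (X 2 * pdL 0 f) = _
  rw [X_eq_monomial_mon]
  simpa [cf_pdL_zero] using cf_monomial_mul_add (pdL 0 f) m i k 0 0 1

lemma cf_aOp_zero (f : Series) (m i : ℕ) : cf m i 0 (aOp f) = 0 := by
  change cf m i 0 (X 2 * pdL 0 f) = 0
  rw [X_eq_monomial_mon]; exact cf_monomial_mul_of_not_le _ (by simp)

lemma cf_adagOp_aOp_succ (f : Series) (m i k : ℕ) :
    cf m i (k + 1) (adagOp (aOp f)) = m * cf m i k f := by
  cases m with
  | zero => simp [cf_adagOp_zero]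
  | succ m => rw [cf_adagOp_succ, cf_aOp_succ]; push_cast; ring

lemma oscOp_eq (P : FreeAlgebra ℂ (Fin 2)) (ψ : Series) :
    oscOp P ψ = adagOp (aOp ψ) + monomial (mon 0 1 1) 1 * substOps P ψ := by
  rw [oscOp, X_eq_monomial_mon, X_eq_monomial_mon, monomial_mul_monomial]
  simp [mon_add]

lemma cf_oscOp_zero (P : FreeAlgebra ℂ (Fin 2)) (ψ : Series) (m i : ℕ) :
    cf m i 0 (oscOp P ψ) = 0 := by
  rw [oscOp_eq, cf_add, cf_monomial_mul_of_not_le _ (by simp)]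
  cases m with
  | zero => simp [cf_adagOp_zero]
  | succ m => simp [cf_adagOp_succ, cf_aOp_zero]

lemma cf_oscOp_zero_succ (P : FreeAlgebra ℂ (Fin 2)) (ψ : Series) (m k : ℕ) :
    cf m 0 (k + 1) (oscOp P ψ) = m * cf m 0 k ψ := by
  rw [oscOp_eq, cf_add, cf_adagOp_aOp_succ, cf_monomial_mul_of_not_le _ (by simp), add_zero]

lemma cf_oscOp_succ_succ (P : FreeAlgebra ℂ (Fin 2)) (ψ : Series) (m i k : ℕ) :
    cf m (i + 1) (k + 1) (oscOp P ψ) = m * cf m (i + 1) k ψ + cf m i k (substOps P ψ) := by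
  rw [oscOp_eq, cf_add, cf_adagOp_aOp_succ]
  simpa using cf_monomial_mul_add (substOps P ψ) m i k 0 1 1

lemma dependsOnlyOn_iff {E : Series} :
    DependsOnlyOn E {1, 2} ↔ ∀ d : Fin 3 →₀ ℕ, d 0 ≠ 0 → coeff d E = 0 := by
  refine ⟨fun h d hd => h d ⟨0, by simp, hd⟩, fun h d ⟨j, hj, hd⟩ => h d ?_⟩
  fin_cases j <;> simp_all

lemma DependsOnlyOn.cf_succ {E : Series} (hE : DependsOnlyOn E {1, 2}) (m i k : ℕ) :
    cf (m + 1) i k E = 0 :=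
  dependsOnlyOn_iff.mp hE _ (by simp)

lemma cf_mul_of_dependsOnlyOn {E : Series} (hE : DependsOnlyOn E {1, 2}) (ψ : Series)
    (m i k : ℕ) :
    cf m i k (E * ψ) = ∑ p ∈ antidiagonal i, ∑ q ∈ antidiagonal k,
      cf 0 p.1 q.1 E * cf m p.2 q.2 ψ := by
  rw [← sum_product', cf, coeff_mul]
  symm
  refine sum_of_injOn (fun x => (mon 0 x.1.1 x.2.1, mon m x.1.2 x.2.2)) ?_ ?_ ?_ ?_
  · rintro ⟨⟨a, b⟩, c, d⟩ - ⟨⟨a', b'⟩, c', d'⟩ - h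
    simp only [Prod.mk.injEq, mon_inj] at h
    simp [h]
  · rintro ⟨⟨a, b⟩, c, d⟩ h
    simp only [coe_product, Set.mem_prod, mem_coe, HasAntidiagonal.mem_antidiagonal] at h
    simp [mon_add, h.1, h.2]
  · rintro ⟨x, y⟩ hxy hnot
    by_cases hx : x 0 = 0
    · refine absurd ?_ hnot
      have hsum : ∀ j, x j + y j = mon m i k j := fun j => by
        rw [← Finsupp.add_apply, (HasAntidiagonal.mem_antidiagonal.mp hxy)]
      refine ⟨((x 1, y 1), (x 2, y 2)), ?_, ?_⟩
      · simp only [coe_product, Set.mem_prod, mem_coe, HasAntidiagonal.mem_antidiagonal]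
        exact ⟨by simpa using hsum 1, by simpa using hsum 2⟩
      · have h0 : y 0 = m := by simpa [hx] using hsum 0
        simp only [Prod.mk.injEq]
        exact ⟨by rw [← hx, mon_eta], by rw [← h0, mon_eta]⟩
    · simp [dependsOnlyOn_iff.mp hE x hx]
  · intro x _; rfl

/-! ### Banded operators -/

lemma sum_grid_le {L : ℕ} {f : ℕ → ℕ → ℝ} {B : ℝ} (h : ∀ r ≤ L, ∀ s ≤ 2 * L, f r s ≤ B) :
    ∑ r ∈ range (L + 1), ∑ s ∈ range (2 * L + 1), f r s ≤ ((L : ℝ) + 1) * (2 * L + 1) * B := by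
  have hrow : ∀ r ∈ range (L + 1), ∑ s ∈ range (2 * L + 1), f r s ≤ (2 * L + 1 : ℕ) • B :=
    fun r hr => by
      simpa using sum_le_card_nsmul _ _ _ fun s hs =>
        h r (Nat.lt_succ_iff.mp (mem_range.mp hr)) s (Nat.lt_succ_iff.mp (mem_range.mp hs))
  refine (sum_le_card_nsmul _ _ _ hrow).trans (le_of_eq ?_)
  simp [nsmul_eq_mul]; ring

/-- The `(r, s)` term bounds the contribution of a word in `a, a†` with `r` letters `a` that
shifts the `z`-degree by `L - s`: each `a` costs one power of `ℏ` and a factor at most `m + L`. -/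
def bandTerm (L : ℕ) (ψ : Series) (m i k r s : ℕ) : ℝ :=
  if L ≤ m + s ∧ r ≤ k then ((m : ℝ) + L) ^ r * ‖cf (m + s - L) i (k - r) ψ‖ else 0

def bandSum (L : ℕ) (ψ : Series) (m i k : ℕ) : ℝ :=
  ∑ r ∈ range (L + 1), ∑ s ∈ range (2 * L + 1), bandTerm L ψ m i k r s

def BandBounded (T : Module.End ℂ Series) (L : ℕ) (C : ℝ) : Prop :=
  ∀ ψ m i k, ‖cf m i k (T ψ)‖ ≤ C * bandSum L ψ m i k

def IsBanded (T : Module.End ℂ Series) : Prop :=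
  ∃ L C, 0 ≤ C ∧ BandBounded T L C

lemma bandTerm_nonneg (L : ℕ) (ψ : Series) (m i k r s : ℕ) : 0 ≤ bandTerm L ψ m i k r s := by
  unfold bandTerm; split_ifs <;> positivity

lemma bandSum_nonneg (L : ℕ) (ψ : Series) (m i k : ℕ) : 0 ≤ bandSum L ψ m i k :=
  sum_nonneg fun _ _ => sum_nonneg fun _ _ => bandTerm_nonneg ..

lemma bandTerm_le_bandSum (L : ℕ) (ψ : Series) (m i k : ℕ) {r s : ℕ} (hr : r ≤ L)
    (hs : s ≤ 2 * L) :
    bandTerm L ψ m i k r s ≤ bandSum L ψ m i k := by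
  have hnn := bandTerm_nonneg L ψ m i k
  refine (single_le_sum (f := fun s => bandTerm L ψ m i k r s) (fun s _ => hnn r s)
    (mem_range.mpr (show s < 2 * L + 1 by omega))).trans ?_
  exact single_le_sum (f := fun r => ∑ s ∈ range (2 * L + 1), bandTerm L ψ m i k r s)
    (fun r _ => sum_nonneg fun s _ => hnn r s) (mem_range.mpr (show r < L + 1 by omega))

lemma bandSum_eq_zero {L : ℕ} {ψ : Series} {m i k : ℕ}
    (h : ∀ m' k', m ≤ m' + L → cf m' i k' ψ = 0) : bandSum L ψ m i k = 0 := by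
  refine sum_eq_zero fun r _ => sum_eq_zero fun s _ => ?_
  unfold bandTerm
  split_ifs with hg
  · rw [h _ _ (by omega), norm_zero, mul_zero]
  · rfl

lemma bandSum_le_of_le {L L' : ℕ} (hL : L ≤ L') (ψ : Series) (m i k : ℕ) :
    bandSum L ψ m i k ≤ ((L : ℝ) + 1) * (2 * L + 1) * bandSum L' ψ m i k := by
  refine sum_grid_le fun r hr s hs => ?_
  unfold bandTerm
  split_ifs with hg
  · refine le_trans ?_ (bandTerm_le_bandSum L' ψ m i k (r := r) (s := s + (L' - L))
      (by omega) (by omega))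
    rw [bandTerm, if_pos (show L' ≤ m + (s + (L' - L)) ∧ r ≤ k by omega),
      show m + (s + (L' - L)) - L' = m + s - L by omega]
    gcongr
  · exact bandSum_nonneg ..

lemma pow_mul_bandTerm_le {L₁ L₂ m k r₁ s₁ : ℕ} (h : L₁ ≤ m + s₁ ∧ r₁ ≤ k) (hs₁ : s₁ ≤ 2 * L₁)
    (ψ : Series) (i r₂ s₂ : ℕ) :
    ((m : ℝ) + L₁) ^ r₁ * bandTerm L₂ ψ (m + s₁ - L₁) i (k - r₁) r₂ s₂ ≤
      bandTerm (L₁ + L₂) ψ m i k (r₁ + r₂) (s₁ + s₂) := by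
  unfold bandTerm
  split_ifs with h₂ h₁₂
  · rw [show m + s₁ - L₁ + s₂ - L₂ = m + (s₁ + s₂) - (L₁ + L₂) by omega,
      show k - r₁ - r₂ = k - (r₁ + r₂) by omega, ← mul_assoc, pow_add]
    have h₁ : (m : ℝ) + L₁ ≤ m + ↑(L₁ + L₂) := by push_cast; linarith
    have h₂ : ((m + s₁ - L₁ : ℕ) : ℝ) + L₂ ≤ m + ↑(L₁ + L₂) := by exact_mod_cast (by omega)
    gcongr
  · omega
  · rw [mul_zero]; positivity
  · rw [mul_zero]

variable {T T₁ T₂ : Module.End ℂ Series} {L L₁ L₂ : ℕ} {C C₁ C₂ : ℝ}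

lemma BandBounded.cf_eq_zero (hT : BandBounded T L C) {ψ : Series} {m i k : ℕ}
    (h : ∀ m' k', m ≤ m' + L → cf m' i k' ψ = 0) : cf m i k (T ψ) = 0 :=
  norm_le_zero_iff.mp <| (hT ψ m i k).trans (by rw [bandSum_eq_zero h, mul_zero])

lemma BandBounded.cf_congr (hT : BandBounded T L C) {ψ φ : Series} {i : ℕ}
    (h : ∀ m k, cf m i k ψ = cf m i k φ) (m k : ℕ) : cf m i k (T ψ) = cf m i k (T φ) := by
  rw [← sub_eq_zero, ← cf_sub, ← map_sub]
  exact hT.cf_eq_zero fun m' k' _ => by rw [cf_sub, h, sub_self]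

lemma BandBounded.add (h₁ : BandBounded T₁ L₁ C₁) (h₂ : BandBounded T₂ L₂ C₂)
    (hC₁ : 0 ≤ C₁) (hC₂ : 0 ≤ C₂) :
    BandBounded (T₁ + T₂) (L₁ + L₂)
      (C₁ * (((L₁ : ℝ) + 1) * (2 * L₁ + 1)) + C₂ * (((L₂ : ℝ) + 1) * (2 * L₂ + 1))) := by
  intro ψ m i k
  rw [LinearMap.add_apply, cf_add]
  calc ‖cf m i k (T₁ ψ) + cf m i k (T₂ ψ)‖
      ≤ C₁ * bandSum L₁ ψ m i k + C₂ * bandSum L₂ ψ m i k :=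
        (norm_add_le _ _).trans (add_le_add (h₁ ψ m i k) (h₂ ψ m i k))
    _ ≤ C₁ * ((((L₁ : ℝ) + 1) * (2 * L₁ + 1)) * bandSum (L₁ + L₂) ψ m i k) +
        C₂ * ((((L₂ : ℝ) + 1) * (2 * L₂ + 1)) * bandSum (L₁ + L₂) ψ m i k) := by
      gcongr
      exacts [bandSum_le_of_le (Nat.le_add_right L₁ L₂) ψ m i k,
        bandSum_le_of_le (Nat.le_add_left L₂ L₁) ψ m i k]
    _ = _ := by ring

lemma BandBounded.bandTerm_le (h₂ : BandBounded T₂ L₂ C₂) (hC₂ : 0 ≤ C₂) (ψ : Series)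
    (m i k : ℕ) {r₁ s₁ : ℕ} (hr₁ : r₁ ≤ L₁) (hs₁ : s₁ ≤ 2 * L₁) :
    bandTerm L₁ (T₂ ψ) m i k r₁ s₁ ≤
      C₂ * (((L₂ : ℝ) + 1) * (2 * L₂ + 1) * bandSum (L₁ + L₂) ψ m i k) := by
  unfold bandTerm
  split_ifs with hg
  · refine (mul_le_mul_of_nonneg_left (h₂ ψ _ _ _) (by positivity)).trans ?_
    rw [mul_left_comm, bandSum, mul_sum]
    simp_rw [mul_sum (s := range (2 * L₂ + 1))]
    exact mul_le_mul_of_nonneg_left (sum_grid_le (L := L₂) fun r₂ hr₂ s₂ hs₂ =>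
      (pow_mul_bandTerm_le hg hs₁ ψ i r₂ s₂).trans (bandTerm_le_bandSum (L₁ + L₂) ψ m i k
        (r := r₁ + r₂) (s := s₁ + s₂) (by omega) (by omega))) hC₂
  · have := bandSum_nonneg (L₁ + L₂) ψ m i k
    positivity

lemma BandBounded.mul (h₁ : BandBounded T₁ L₁ C₁) (h₂ : BandBounded T₂ L₂ C₂)
    (hC₁ : 0 ≤ C₁) (hC₂ : 0 ≤ C₂) :
    BandBounded (T₁ * T₂) (L₁ + L₂)
      (C₁ * (((L₁ : ℝ) + 1) * (2 * L₁ + 1)) * (C₂ * (((L₂ : ℝ) + 1) * (2 * L₂ + 1)))) := by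
  intro ψ m i k
  refine (h₁ (T₂ ψ) m i k).trans ?_
  have := sum_grid_le (L := L₁) fun r hr s hs => h₂.bandTerm_le hC₂ ψ m i k hr hs
  calc C₁ * bandSum L₁ (T₂ ψ) m i k
      ≤ C₁ * (((L₁ : ℝ) + 1) * (2 * L₁ + 1) *
          (C₂ * (((L₂ : ℝ) + 1) * (2 * L₂ + 1) * bandSum (L₁ + L₂) ψ m i k))) :=
        mul_le_mul_of_nonneg_left this hC₁
    _ = _ := by ring

lemma IsBanded.add (h₁ : IsBanded T₁) (h₂ : IsBanded T₂) : IsBanded (T₁ + T₂) := by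
  obtain ⟨L₁, C₁, hC₁, h₁⟩ := h₁
  obtain ⟨L₂, C₂, hC₂, h₂⟩ := h₂
  exact ⟨_, _, by positivity, h₁.add h₂ hC₁ hC₂⟩

lemma IsBanded.mul (h₁ : IsBanded T₁) (h₂ : IsBanded T₂) : IsBanded (T₁ * T₂) := by
  obtain ⟨L₁, C₁, hC₁, h₁⟩ := h₁
  obtain ⟨L₂, C₂, hC₂, h₂⟩ := h₂
  exact ⟨_, _, by positivity, h₁.mul h₂ hC₁ hC₂⟩

lemma isBanded_algebraMap (c : ℂ) : IsBanded (algebraMap ℂ (Module.End ℂ Series) c) := by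
  refine ⟨0, ‖c‖, norm_nonneg c, fun ψ m i k => ?_⟩
  rw [Module.algebraMap_end_apply, cf_smul, norm_mul]
  refine mul_le_mul_of_nonneg_left (le_of_eq_of_le ?_ (bandTerm_le_bandSum 0 ψ m i k
    (r := 0) (s := 0) le_rfl le_rfl)) (norm_nonneg c)
  simp [bandTerm]

lemma isBanded_aOp : IsBanded aOp := by
  refine ⟨1, 1, zero_le_one, fun ψ m i k => ?_⟩
  rw [one_mul]
  cases k with
  | zero => rw [cf_aOp_zero, norm_zero]; exact bandSum_nonneg ..
  | succ k =>
    refine le_of_eq_of_le ?_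
      (bandTerm_le_bandSum 1 ψ m i (k + 1) (r := 1) (s := 2) le_rfl le_rfl)
    rw [cf_aOp_succ, bandTerm, if_pos (by omega), norm_mul, pow_one,
      show m + 2 - 1 = m + 1 by omega, Nat.add_sub_cancel]
    norm_cast

lemma isBanded_adagOp : IsBanded adagOp := by
  refine ⟨1, 1, zero_le_one, fun ψ m i k => ?_⟩
  rw [one_mul]
  cases m with
  | zero => rw [cf_adagOp_zero, norm_zero]; exact bandSum_nonneg ..
  | succ m =>
    refine le_of_eq_of_le ?_ (bandTerm_le_bandSum 1 ψ (m + 1) i k (r := 0) (s := 0) zero_le_one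
      (by omega))
    rw [cf_adagOp_succ, bandTerm, if_pos (by omega)]
    simp

lemma isBanded_substOps (P : FreeAlgebra ℂ (Fin 2)) : IsBanded (substOps P) := by
  induction P using FreeAlgebra.induction with
  | grade0 c => rw [substOps, AlgHom.commutes]; exact isBanded_algebraMap c
  | grade1 x =>
    rw [substOps, FreeAlgebra.lift_ι_apply]
    split_ifs
    exacts [isBanded_aOp, isBanded_adagOp]
  | mul a b ha hb => rw [substOps, map_mul]; exact ha.mul hb
  | add a b ha hb => rw [substOps, map_add]; exact ha.add hb

/-! ### The Rayleigh–Schrödinger recursion -/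

/-- The coefficient of `z^m t^i ℏ^k` in `((E - E|_{t=0}) / (tℏ)) ψ`. -/
def tail (E ψ : Series) (m i k : ℕ) : ℂ :=
  ∑ p ∈ antidiagonal i, ∑ q ∈ antidiagonal k, cf 0 (p.1 + 1) (q.1 + 1) E * cf m p.2 q.2 ψ

/-- `RSCond` read off coefficientwise (`rsCond_iff`): the last field computes level `i + 1` of
`ψ` from levels `≤ i`. -/
structure RSRecursion (P : FreeAlgebra ℂ (Fin 2)) (n : ℕ) (E ψ : Series) : Prop where
  dependsOnlyOn : DependsOnlyOn E {1, 2}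
  cf_psi_zero : ∀ m k, cf m 0 k ψ = if m = n ∧ k = 0 then 1 else 0
  cf_psi_diag_succ : ∀ i k, cf n (i + 1) k ψ = 0
  cf_E_zero : ∀ k, cf 0 0 k E = if k = 1 then (n : ℂ) else 0
  cf_E_succ_zero : ∀ i, cf 0 (i + 1) 0 E = 0
  cf_E_succ_succ : ∀ i k, cf 0 (i + 1) (k + 1) E = cf n i k (substOps P ψ)
  sub_mul_cf_psi_succ : ∀ m i k, m ≠ n →
    ((m : ℂ) - n) * cf m (i + 1) k ψ = tail E ψ m i k - cf m i k (substOps P ψ)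

lemma normalized_zero_iff (ψ : Series) (n : ℕ) :
    (∀ d : Fin 3 →₀ ℕ, d 1 = 0 → coeff d ψ = if d = Finsupp.single 0 n then 1 else 0) ↔
      ∀ m k, cf m 0 k ψ = if m = n ∧ k = 0 then 1 else 0 := by
  refine ⟨fun h m k => by simpa [cf, eq_single_iff] using h (mon m 0 k) rfl,
    fun h d hd => ?_⟩
  rw [coeff_eq_cf, hd, h]
  simp [eq_single_iff, hd]

lemma normalized_diag_iff (ψ : Series) (n : ℕ) :
    (∀ d : Fin 3 →₀ ℕ, d 0 = n → coeff d ψ = if d = Finsupp.single 0 n then 1 else 0) ↔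
      ∀ i k, cf n i k ψ = if i = 0 ∧ k = 0 then 1 else 0 := by
  refine ⟨fun h i k => by simpa [cf, eq_single_iff] using h (mon n i k) rfl,
    fun h d hd => ?_⟩
  rw [coeff_eq_cf, hd, h]
  simp [eq_single_iff, hd]

lemma eq_of_mem_antidiagonal_of_snd_eq_zero {i : ℕ} {p : ℕ × ℕ} (hp : p ∈ antidiagonal i)
    (h : p.2 = 0) : p = (i, 0) := by
  rw [HasAntidiagonal.mem_antidiagonal, h, add_zero] at hp
  exact Prod.ext hp h

lemma cf_mul_of_diag {E ψ : Series} (hE : DependsOnlyOn E {1, 2}) {n : ℕ}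
    (hψ : ∀ i k, cf n i k ψ = if i = 0 ∧ k = 0 then 1 else 0) (i k : ℕ) :
    cf n i k (E * ψ) = cf 0 i k E := by
  rw [cf_mul_of_dependsOnlyOn hE, sum_eq_single_of_mem (i, 0) (by simp),
    sum_eq_single_of_mem (k, 0) (by simp)]
  · simp [hψ]
  · intro q hq hne
    rw [hψ, if_neg fun h => hne (eq_of_mem_antidiagonal_of_snd_eq_zero hq h.2), mul_zero]
  · intro p hp hne
    refine sum_eq_zero fun q _ => ?_
    rw [hψ, if_neg fun h => hne (eq_of_mem_antidiagonal_of_snd_eq_zero hp h.1), mul_zero]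

lemma sum_antidiagonal_cf_zero_mul {E : Series} {n : ℕ}
    (hE0 : ∀ k, cf 0 0 k E = if k = 1 then (n : ℂ) else 0) (g : ℕ → ℂ) (k : ℕ) :
    ∑ q ∈ antidiagonal (k + 1), cf 0 0 q.1 E * g q.2 = n * g k := by
  rw [Nat.sum_antidiagonal_eq_sum_range_succ_mk]
  simp [hE0]

lemma cf_mul_zero_succ {E : Series} (hE : DependsOnlyOn E {1, 2}) {n : ℕ}
    (hE0 : ∀ k, cf 0 0 k E = if k = 1 then (n : ℂ) else 0) (ψ : Series) (m k : ℕ) :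
    cf m 0 (k + 1) (E * ψ) = n * cf m 0 k ψ := by
  rw [cf_mul_of_dependsOnlyOn hE]
  simpa using sum_antidiagonal_cf_zero_mul hE0 (fun j => cf m 0 j ψ) k

lemma cf_mul_succ_succ {E : Series} (hE : DependsOnlyOn E {1, 2}) {n : ℕ}
    (hE0 : ∀ k, cf 0 0 k E = if k = 1 then (n : ℂ) else 0) (hE1 : ∀ i, cf 0 (i + 1) 0 E = 0)
    (ψ : Series) (m i k : ℕ) :
    cf m (i + 1) (k + 1) (E * ψ) = n * cf m (i + 1) k ψ + tail E ψ m i k := by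
  rw [cf_mul_of_dependsOnlyOn hE, Nat.sum_antidiagonal_succ,
    sum_antidiagonal_cf_zero_mul hE0 (fun j => cf m (i + 1) j ψ)]
  simp [tail, Nat.sum_antidiagonal_succ, hE1]

namespace RSRecursion

variable {P : FreeAlgebra ℂ (Fin 2)} {n : ℕ} {E ψ : Series}

lemma cf_E_hfree (h : RSRecursion P n E ψ) (i : ℕ) : cf 0 i 0 E = 0 := by
  cases i with
  | zero => simp [h.cf_E_zero]
  | succ i => exact h.cf_E_succ_zero i

lemma cf_psi_diag (h : RSRecursion P n E ψ) (i k : ℕ) :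
    cf n i k ψ = if i = 0 ∧ k = 0 then 1 else 0 := by
  cases i with
  | zero => simp [h.cf_psi_zero]
  | succ i => simp [h.cf_psi_diag_succ]

lemma cf_mul_zero (h : RSRecursion P n E ψ) (m i : ℕ) : cf m i 0 (E * ψ) = 0 := by
  simp [cf_mul_of_dependsOnlyOn h.dependsOnlyOn, h.cf_E_hfree]

lemma oscOp_eq_mul (h : RSRecursion P n E ψ) : oscOp P ψ = E * ψ := by
  refine ext_cf fun m i k => ?_
  by_cases hm : m = n
  · subst hm
    rw [cf_mul_of_diag h.dependsOnlyOn h.cf_psi_diag]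
    rcases i with _ | i <;> rcases k with _ | k
    · simp [cf_oscOp_zero, h.cf_E_zero]
    · simp [cf_oscOp_zero_succ, h.cf_E_zero, h.cf_psi_zero]
    · rw [cf_oscOp_zero, h.cf_E_succ_zero]
    · rw [cf_oscOp_succ_succ, h.cf_psi_diag_succ, h.cf_E_succ_succ, mul_zero, zero_add]
  · rcases k with _ | k
    · rw [cf_oscOp_zero, h.cf_mul_zero]
    rcases i with _ | i
    · simp [cf_oscOp_zero_succ, cf_mul_zero_succ h.dependsOnlyOn h.cf_E_zero, h.cf_psi_zero,
        hm]
    · rw [cf_oscOp_succ_succ, cf_mul_succ_succ h.dependsOnlyOn h.cf_E_zero h.cf_E_succ_zero]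
      linear_combination h.sub_mul_cf_psi_succ m i k hm

end RSRecursion

theorem rsCond_iff {P : FreeAlgebra ℂ (Fin 2)} {n : ℕ} {E ψ : Series} :
    RSCond P n (E, ψ) ↔ RSRecursion P n E ψ := by
  refine ⟨fun ⟨hE, heq, hzero, hdiag⟩ => ?_, fun h => ⟨h.dependsOnlyOn, h.oscOp_eq_mul,
    (normalized_zero_iff ψ n).mpr h.cf_psi_zero, (normalized_diag_iff ψ n).mpr h.cf_psi_diag⟩⟩
  rw [normalized_zero_iff] at hzero
  rw [normalized_diag_iff] at hdiag
  have hcf : ∀ m i k, cf m i k (oscOp P ψ) = cf m i k (E * ψ) := fun m i k => by rw [heq]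
  have hE0 : ∀ k, cf 0 0 k E = if k = 1 then (n : ℂ) else 0 := by
    intro k
    rw [← cf_mul_of_diag hE hdiag, ← hcf]
    cases k with
    | zero => simp [cf_oscOp_zero]
    | succ k => simp [cf_oscOp_zero_succ, hdiag]
  have hE1 : ∀ i, cf 0 (i + 1) 0 E = 0 := fun i => by
    rw [← cf_mul_of_diag hE hdiag, ← hcf, cf_oscOp_zero]
  refine ⟨hE, hzero, fun i k => by simp [hdiag], hE0, hE1, fun i k => ?_, fun m i k hm => ?_⟩
  · rw [← cf_mul_of_diag hE hdiag, ← hcf, cf_oscOp_succ_succ, hdiag]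
    simp
  · have := hcf m (i + 1) (k + 1)
    rw [cf_oscOp_succ_succ, cf_mul_succ_succ hE hE0 hE1] at this
    linear_combination this

/-! ### Existence and uniqueness -/

namespace RSRecursion

variable {P : FreeAlgebra ℂ (Fin 2)} {n : ℕ}

lemma psi_eq {E₁ E₂ ψ₁ ψ₂ : Series} (h₁ : RSRecursion P n E₁ ψ₁)
    (h₂ : RSRecursion P n E₂ ψ₂) : ψ₁ = ψ₂ := by
  obtain ⟨L, C, -, hT⟩ := isBanded_substOps P
  suffices ∀ i m k, cf m i k ψ₁ = cf m i k ψ₂ from ext_cf fun m i k => this i m k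
  intro i
  induction i using Nat.strong_induction_on with
  | _ i ih =>
  rcases i with _ | i
  · intro m k; rw [h₁.cf_psi_zero, h₂.cf_psi_zero]
  intro m k
  by_cases hm : m = n
  · subst hm; rw [h₁.cf_psi_diag_succ, h₂.cf_psi_diag_succ]
  have hT' : ∀ j ≤ i, ∀ m k, cf m j k (substOps P ψ₁) = cf m j k (substOps P ψ₂) :=
    fun j hj => hT.cf_congr (ih j (by omega))
  refine mul_left_cancel₀ (sub_ne_zero.mpr (Nat.cast_injective.ne hm)) ?_
  rw [h₁.sub_mul_cf_psi_succ m i k hm, h₂.sub_mul_cf_psi_succ m i k hm, hT' i le_rfl]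
  congr 1
  refine sum_congr rfl fun p hp => sum_congr rfl fun q _ => ?_
  have hp' := HasAntidiagonal.mem_antidiagonal.mp hp
  rw [h₁.cf_E_succ_succ, h₂.cf_E_succ_succ, hT' p.1 (by omega), ih p.2 (by omega)]

lemma E_eq {E₁ E₂ ψ : Series} (h₁ : RSRecursion P n E₁ ψ) (h₂ : RSRecursion P n E₂ ψ) :
    E₁ = E₂ := by
  refine ext_cf fun m i k => ?_
  rcases m with _ | m
  · rcases i with _ | i
    · rw [h₁.cf_E_zero, h₂.cf_E_zero]
    rcases k with _ | k
    · rw [h₁.cf_E_succ_zero, h₂.cf_E_succ_zero]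
    · rw [h₁.cf_E_succ_succ, h₂.cf_E_succ_succ]
  · rw [DependsOnlyOn.cf_succ h₁.dependsOnlyOn, DependsOnlyOn.cf_succ h₂.dependsOnlyOn]

end RSRecursion

def levelSeries (i : ℕ) (g : ℕ → ℕ → ℂ) : Series :=
  ofCoeff fun d => if d 1 = i then g (d 0) (d 2) else 0

/-- `psiLevel P n i m k` is `ψ_{m,i,k}`, by `RSRecursion.sub_mul_cf_psi_succ` with
`E_{a+1,c+1} = (Pψ)_{n,a,c}` substituted. -/
def psiLevel (P : FreeAlgebra ℂ (Fin 2)) (n : ℕ) : ℕ → ℕ → ℕ → ℂ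
  | 0 => fun m k => if m = n ∧ k = 0 then 1 else 0
  | i + 1 => fun m k => if m = n then 0 else ((m : ℂ) - n)⁻¹ *
      ((∑ a : Fin (i + 1), ∑ q ∈ antidiagonal k,
          cf n a q.1 (substOps P (levelSeries a (psiLevel P n a))) * psiLevel P n (i - a) m q.2) -
        cf m i k (substOps P (levelSeries i (psiLevel P n i))))
termination_by i => i
decreasing_by all_goals omega

def psiSol (P : FreeAlgebra ℂ (Fin 2)) (n : ℕ) : Series :=
  ofCoeff fun d => psiLevel P n (d 1) (d 0) (d 2)

def eLevel (P : FreeAlgebra ℂ (Fin 2)) (n : ℕ) : ℕ → ℕ → ℂ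
  | 0, k => if k = 1 then (n : ℂ) else 0
  | _ + 1, 0 => 0
  | i + 1, k + 1 => cf n i k (substOps P (psiSol P n))

def eSol (P : FreeAlgebra ℂ (Fin 2)) (n : ℕ) : Series :=
  ofCoeff fun d => if d 0 = 0 then eLevel P n (d 1) (d 2) else 0

theorem rsRecursion_sol (P : FreeAlgebra ℂ (Fin 2)) (n : ℕ) :
    RSRecursion P n (eSol P n) (psiSol P n) := by
  obtain ⟨L, C, -, hT⟩ := isBanded_substOps P
  have hlevel : ∀ i m k, cf m i k (substOps P (levelSeries i (psiLevel P n i))) =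
      cf m i k (substOps P (psiSol P n)) :=
    fun i => hT.cf_congr fun m k => by simp [levelSeries, psiSol]
  refine ⟨dependsOnlyOn_iff.mpr fun d hd => by simp [eSol, hd],
    fun m k => by simp [psiSol, psiLevel],
    fun i k => by simp [psiSol, psiLevel], fun k => by simp [eSol, eLevel],
    fun i => by simp [eSol, eLevel], fun i k => by simp [eSol, eLevel], fun m i k hm => ?_⟩
  have hsub : ((m : ℂ) - n) ≠ 0 := sub_ne_zero.mpr (Nat.cast_injective.ne hm)
  simp only [psiSol, cf_ofCoeff, mon_apply_zero, mon_apply_one, mon_apply_two]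
  rw [psiLevel]
  beta_reduce
  rw [if_neg hm, ← mul_assoc, mul_inv_cancel₀ hsub, one_mul, hlevel, tail,
    Nat.sum_antidiagonal_eq_sum_range_succ_mk, ← Fin.sum_univ_eq_sum_range]
  simp [hlevel, eSol, eLevel, psiSol]

/-! ### Estimates -/

def wt (j : ℕ) : ℝ := (((j : ℝ) + 1) ^ 2)⁻¹

lemma wt_pos (j : ℕ) : 0 < wt j := by unfold wt; positivity

lemma wt_le_one (j : ℕ) : wt j ≤ 1 :=
  inv_le_one_of_one_le₀ (one_le_pow₀ (by linarith [j.cast_nonneg (α := ℝ)]))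

lemma wt_le_mul_wt {j k r : ℕ} (h : k ≤ j + r) : wt j ≤ ((r : ℝ) + 1) ^ 2 * wt k := by
  have hk : (k : ℝ) + 1 ≤ ((j : ℝ) + 1) * ((r : ℝ) + 1) := by
    have : (k : ℝ) ≤ j + r := by exact_mod_cast h
    nlinarith [j.cast_nonneg (α := ℝ), r.cast_nonneg (α := ℝ)]
  rw [wt, wt, ← div_eq_mul_inv, inv_eq_one_div, div_le_div_iff₀ (by positivity) (by positivity),
    one_mul, ← mul_pow, mul_comm]
  gcongr

lemma sum_range_wt_le (N : ℕ) : ∑ j ∈ range N, wt j ≤ 2 := by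
  have h := sum_Ioo_inv_sq_le (α := ℝ) 0 (N + 1)
  rw [← Finset.Ico_add_one_left_eq_Ioo, ← sum_Ico_add' (fun i : ℕ => ((i : ℝ) ^ 2)⁻¹),
    ← range_eq_Ico] at h
  simpa [wt] using h

lemma sum_antidiagonal_wt_le (K : ℕ) : ∑ p ∈ antidiagonal K, wt p.1 ≤ 2 := by
  rw [Nat.sum_antidiagonal_eq_sum_range_succ_mk]
  exact sum_range_wt_le _

lemma sum_antidiagonal_wt_mul_wt_le (K : ℕ) :
    ∑ p ∈ antidiagonal K, wt p.1 * wt p.2 ≤ 8 * wt K := by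
  -- `(x + y)² ≤ 2 (x² + y²)` turns each product into a multiple of a sum
  have hterm : ∀ p ∈ antidiagonal K,
      wt p.1 * wt p.2 ≤ 2 * (((K : ℝ) + 2) ^ 2)⁻¹ * (wt p.1 + wt p.2) := by
    intro p hp
    have hK : ((p.1 : ℝ) + 1) + ((p.2 : ℝ) + 1) = K + 2 := by
      rw [← HasAntidiagonal.mem_antidiagonal.mp hp]; push_cast; ring
    rw [← hK, wt, wt]
    have hx : (0 : ℝ) < (p.1 : ℝ) + 1 := by positivity
    have hy : (0 : ℝ) < (p.2 : ℝ) + 1 := by positivity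
    field_simp
    nlinarith [sq_nonneg ((p.1 : ℝ) - p.2), mul_pos hx hy]
  have hsum : ∑ p ∈ antidiagonal K, (wt p.1 + wt p.2) ≤ 4 := by
    have hswap : ∑ p ∈ antidiagonal K, wt p.2 = ∑ p ∈ antidiagonal K, wt p.1 :=
      Nat.sum_antidiagonal_swap (f := fun p => wt p.1)
    rw [sum_add_distrib, hswap]
    linarith [sum_antidiagonal_wt_le K]
  calc ∑ p ∈ antidiagonal K, wt p.1 * wt p.2
      ≤ 2 * (((K : ℝ) + 2) ^ 2)⁻¹ * ∑ p ∈ antidiagonal K, (wt p.1 + wt p.2) := by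
        rw [mul_sum]; exact sum_le_sum hterm
    _ ≤ 2 * (((K : ℝ) + 2) ^ 2)⁻¹ * 4 := by gcongr
    _ ≤ 8 * wt K := by
        rw [wt]
        have : (((K : ℝ) + 2) ^ 2)⁻¹ ≤ (((K : ℝ) + 1) ^ 2)⁻¹ := by gcongr; linarith
        linarith

/-- The majorant of `‖ψ_{m,i,k}‖`. -/
def growth (A c : ℝ) (i k : ℕ) : ℝ := A ^ i * c ^ k * ((i : ℝ) + 1) ^ k * wt i * wt k

def growthSucc (A c : ℝ) (i k : ℕ) : ℝ :=
  A ^ i * c ^ k * ((i : ℝ) + 2) ^ k * wt (i + 1) * wt k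

def bandConst (L : ℕ) (C : ℝ) : ℝ := 4 * C * ((L : ℝ) + 1) ^ 3 * (2 * L + 1)

section Estimates

variable {A c : ℝ}

lemma growth_nonneg (hA : 0 ≤ A) (hc : 0 ≤ c) (i k : ℕ) : 0 ≤ growth A c i k := by
  have := wt_pos i; have := wt_pos k
  unfold growth; positivity

lemma growthSucc_nonneg (hA : 0 ≤ A) (hc : 0 ≤ c) (i k : ℕ) : 0 ≤ growthSucc A c i k := by
  have := wt_pos (i + 1); have := wt_pos k
  unfold growthSucc; positivity

lemma growth_succ (A c : ℝ) (i k : ℕ) : growth A c (i + 1) k = A * growthSucc A c i k := by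
  rw [growth, growthSucc]; push_cast; ring

lemma wt_le_four_mul_wt_succ (i : ℕ) : wt i ≤ 4 * wt (i + 1) := by
  have := wt_le_mul_wt (j := i) (k := i + 1) (r := 1) le_rfl
  norm_num at this; exact this

lemma BandBounded.norm_cf_le_growthSucc {T : Module.End ℂ Series} {L : ℕ} {C : ℝ}
    (hT : BandBounded T L C) (hC : 0 ≤ C) (hA : 0 ≤ A) (hc : 0 ≤ c) {ψ : Series} {i : ℕ}
    (hψ : ∀ m k, ‖cf m i k ψ‖ ≤ growth A c i k) {m : ℕ} (hm : (m : ℝ) + L ≤ c * (i + 2))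
    (k : ℕ) : ‖cf m i k (T ψ)‖ ≤ bandConst L C * growthSucc A c i k := by
  have hterm : ∀ r ≤ L, ∀ s ≤ 2 * L,
      bandTerm L ψ m i k r s ≤ 4 * ((L : ℝ) + 1) ^ 2 * growthSucc A c i k := by
    intro r hr s _
    unfold bandTerm
    split_ifs with hg
    · have hpow : ((i : ℝ) + 2) ^ r * ((i : ℝ) + 1) ^ (k - r) ≤ ((i : ℝ) + 2) ^ k := by
        calc ((i : ℝ) + 2) ^ r * ((i : ℝ) + 1) ^ (k - r)
            ≤ ((i : ℝ) + 2) ^ r * ((i : ℝ) + 2) ^ (k - r) := by gcongr; linarith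
          _ = ((i : ℝ) + 2) ^ k := by rw [← pow_add, Nat.add_sub_cancel' hg.2]
      have hwk : wt (k - r) ≤ ((L : ℝ) + 1) ^ 2 * wt k :=
        (wt_le_mul_wt (j := k - r) (k := k) (r := r) (by omega)).trans
          (by have := wt_pos k; gcongr)
      have := wt_pos i; have := wt_pos (k - r); have := wt_pos (i + 1)
      calc ((m : ℝ) + L) ^ r * ‖cf (m + s - L) i (k - r) ψ‖
          ≤ (c * (i + 2)) ^ r * growth A c i (k - r) := by gcongr; exact hψ _ _
        _ = A ^ i * (c ^ r * c ^ (k - r)) * (((i : ℝ) + 2) ^ r * ((i : ℝ) + 1) ^ (k - r)) *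
              wt i * wt (k - r) := by rw [growth, mul_pow]; ring
        _ ≤ A ^ i * c ^ k * ((i : ℝ) + 2) ^ k * (4 * wt (i + 1)) * (((L : ℝ) + 1) ^ 2 * wt k) := by
              rw [← pow_add, Nat.add_sub_cancel' hg.2]
              gcongr ?_ * ?_ * ?_
              · gcongr
              · exact wt_le_four_mul_wt_succ i
        _ = 4 * ((L : ℝ) + 1) ^ 2 * growthSucc A c i k := by rw [growthSucc]; ring
    · have := growthSucc_nonneg hA hc i k
      positivity
  calc ‖cf m i k (T ψ)‖
      ≤ C * (((L : ℝ) + 1) * (2 * L + 1) * (4 * ((L : ℝ) + 1) ^ 2 * growthSucc A c i k)) :=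
        (hT ψ m i k).trans (mul_le_mul_of_nonneg_left (sum_grid_le hterm) hC)
    _ = bandConst L C * growthSucc A c i k := by rw [bandConst]; ring

lemma sum_antidiagonal_wt_succ_mul_wt_le (i : ℕ) :
    ∑ p ∈ antidiagonal i, wt (p.1 + 1) * wt p.2 ≤ 8 * wt (i + 1) := by
  have h := sum_antidiagonal_wt_mul_wt_le (i + 1)
  rw [Nat.sum_antidiagonal_succ] at h
  have := mul_pos (wt_pos 0) (wt_pos (i + 1))
  linarith

lemma growthSucc_mul_growth_le (hA : 0 ≤ A) (hc : 0 ≤ c) {i k : ℕ} {p q : ℕ × ℕ}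
    (hp : p.1 + p.2 = i) (hq : q.1 + q.2 = k) :
    growthSucc A c p.1 q.1 * growth A c p.2 q.2 ≤
      A ^ i * c ^ k * ((i : ℝ) + 2) ^ k * ((wt (p.1 + 1) * wt p.2) * (wt q.1 * wt q.2)) := by
  have hpow : ((p.1 : ℝ) + 2) ^ q.1 * ((p.2 : ℝ) + 1) ^ q.2 ≤ ((i : ℝ) + 2) ^ k := by
    rw [← hq, pow_add]
    have h1 : (p.1 : ℝ) ≤ i := by exact_mod_cast (show p.1 ≤ i by omega)
    have h2 : (p.2 : ℝ) ≤ i := by exact_mod_cast (show p.2 ≤ i by omega)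
    gcongr
    linarith
  have := wt_pos (p.1 + 1); have := wt_pos p.2; have := wt_pos q.1; have := wt_pos q.2
  calc growthSucc A c p.1 q.1 * growth A c p.2 q.2
      = A ^ (p.1 + p.2) * c ^ (q.1 + q.2) *
          (((p.1 : ℝ) + 2) ^ q.1 * ((p.2 : ℝ) + 1) ^ q.2) *
          ((wt (p.1 + 1) * wt p.2) * (wt q.1 * wt q.2)) := by
        rw [growthSucc, growth, pow_add, pow_add]; ring
    _ ≤ _ := by rw [hp, hq]; gcongr

lemma norm_tail_le {E ψ : Series} {K : ℝ} (hA : 0 ≤ A) (hc : 0 ≤ c) (hK : 0 ≤ K) {i : ℕ}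
    (hE : ∀ a ≤ i, ∀ k, ‖cf 0 (a + 1) (k + 1) E‖ ≤ K * growthSucc A c a k)
    (hψ : ∀ b ≤ i, ∀ m k, ‖cf m b k ψ‖ ≤ growth A c b k) (m k : ℕ) :
    ‖tail E ψ m i k‖ ≤ 64 * K * growthSucc A c i k := by
  set X := K * (A ^ i * c ^ k * ((i : ℝ) + 2) ^ k)
  have hterm : ∀ p ∈ antidiagonal i, ∀ q ∈ antidiagonal k,
      ‖cf 0 (p.1 + 1) (q.1 + 1) E * cf m p.2 q.2 ψ‖ ≤
        X * ((wt (p.1 + 1) * wt p.2) * (wt q.1 * wt q.2)) := by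
    intro p hp q hq
    have hp' := HasAntidiagonal.mem_antidiagonal.mp hp
    have hq' := HasAntidiagonal.mem_antidiagonal.mp hq
    rw [norm_mul, mul_assoc K]
    calc ‖cf 0 (p.1 + 1) (q.1 + 1) E‖ * ‖cf m p.2 q.2 ψ‖
        ≤ K * growthSucc A c p.1 q.1 * growth A c p.2 q.2 :=
          mul_le_mul (hE p.1 (by omega) q.1) (hψ p.2 (by omega) m q.2) (norm_nonneg _)
            (mul_nonneg hK (growthSucc_nonneg hA hc _ _))
      _ ≤ _ := by
          rw [mul_assoc]
          exact mul_le_mul_of_nonneg_left (growthSucc_mul_growth_le hA hc hp' hq') hK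
  calc ‖tail E ψ m i k‖
      ≤ ∑ p ∈ antidiagonal i, ∑ q ∈ antidiagonal k,
          X * ((wt (p.1 + 1) * wt p.2) * (wt q.1 * wt q.2)) :=
        (norm_sum_le _ _).trans (sum_le_sum fun p hp =>
          (norm_sum_le _ _).trans (sum_le_sum fun q hq => hterm p hp q hq))
    _ = X * ((∑ p ∈ antidiagonal i, wt (p.1 + 1) * wt p.2) *
          ∑ q ∈ antidiagonal k, wt q.1 * wt q.2) := by
        rw [sum_mul_sum, mul_sum]; simp_rw [mul_sum]
    _ ≤ X * ((8 * wt (i + 1)) * (8 * wt k)) := by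
        have := wt_pos (i + 1)
        gcongr
        · exact sum_nonneg fun q _ => mul_nonneg (wt_pos _).le (wt_pos _).le
        · exact sum_antidiagonal_wt_succ_mul_wt_le i
        · exact sum_antidiagonal_wt_mul_wt_le k
    _ = 64 * K * growthSucc A c i k := by rw [growthSucc]; ring

end Estimates

lemma one_le_norm_natCast_sub {m n : ℕ} (h : m ≠ n) : 1 ≤ ‖(m : ℂ) - n‖ := by
  have hz : ((m : ℤ) - n) ≠ 0 := sub_ne_zero.mpr (by exact_mod_cast h)
  have := Int.one_le_abs hz
  rw [show (m : ℂ) - n = (((m : ℤ) - n : ℤ) : ℂ) by push_cast; ring, Complex.norm_intCast]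
  exact_mod_cast this

namespace RSRecursion

variable {P : FreeAlgebra ℂ (Fin 2)} {n : ℕ} {E ψ : Series} {L : ℕ} {C : ℝ}

lemma cf_psi_eq_zero (h : RSRecursion P n E ψ) (hT : BandBounded (substOps P) L C) :
    ∀ i m k, n + i * L < m → cf m i k ψ = 0 := by
  intro i
  induction i using Nat.strong_induction_on with
  | _ i ih =>
  rcases i with _ | i
  · intro m k hm; rw [h.cf_psi_zero, if_neg (by omega)]
  intro m k hm
  have hmn : m ≠ n := by intro; subst_vars; nlinarith
  have hT0 : cf m i k (substOps P ψ) = 0 :=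
    hT.cf_eq_zero fun m' k' hm' => ih i (by omega) m' k' (by nlinarith)
  have htail : tail E ψ m i k = 0 := by
    refine sum_eq_zero fun p hp => sum_eq_zero fun q _ => ?_
    have hp' := HasAntidiagonal.mem_antidiagonal.mp hp
    have : p.2 * L ≤ (i + 1) * L := Nat.mul_le_mul_right L (by omega)
    rw [ih p.2 (by omega) m q.2 (by omega), mul_zero]
  have := h.sub_mul_cf_psi_succ m i k hmn
  rw [hT0, htail, sub_zero] at this
  exact (mul_eq_zero.mp this).resolve_left (sub_ne_zero.mpr (Nat.cast_injective.ne hmn))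

lemma norm_cf_E_le (h : RSRecursion P n E ψ) (hT : BandBounded (substOps P) L C) (hC : 0 ≤ C)
    {A : ℝ} (hA : 0 ≤ A) {i : ℕ} (hψ : ∀ m k, ‖cf m i k ψ‖ ≤ growth A (n + L + 1) i k) (k : ℕ) :
    ‖cf 0 (i + 1) (k + 1) E‖ ≤ bandConst L C * growthSucc A (n + L + 1) i k := by
  rw [h.cf_E_succ_succ]
  refine hT.norm_cf_le_growthSucc hC hA (by positivity) hψ ?_ k
  have := i.cast_nonneg (α := ℝ)
  nlinarith [n.cast_nonneg (α := ℝ), L.cast_nonneg (α := ℝ)]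

theorem norm_cf_psi_le (h : RSRecursion P n E ψ) (hT : BandBounded (substOps P) L C)
    (hC : 0 ≤ C) : ∀ i m k, ‖cf m i k ψ‖ ≤ growth (65 * bandConst L C) (n + L + 1) i k := by
  have hK : 0 ≤ bandConst L C := by unfold bandConst; positivity
  have hA : 0 ≤ 65 * bandConst L C := by positivity
  have hc : (0 : ℝ) ≤ n + L + 1 := by positivity
  intro i
  induction i using Nat.strong_induction_on with
  | _ i ih =>
  rcases i with _ | i
  · intro m k
    rw [h.cf_psi_zero]
    split_ifs with hmk
    · simp [hmk.2, growth, wt]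
    · rw [norm_zero]; exact growth_nonneg hA hc 0 k
  intro m k
  rw [growth_succ]
  have hgs := growthSucc_nonneg hA hc i k
  by_cases hmn : m = n
  · rw [hmn, h.cf_psi_diag_succ, norm_zero]; positivity
  by_cases hsupp : n + (i + 1) * L < m
  · rw [h.cf_psi_eq_zero hT _ _ _ hsupp, norm_zero]; positivity
  have hm : (m : ℝ) + L ≤ (n + L + 1) * (i + 2) := by
    have : (m : ℝ) ≤ n + (i + 1) * L := by exact_mod_cast (show m ≤ n + (i + 1) * L by omega)
    nlinarith [n.cast_nonneg (α := ℝ), L.cast_nonneg (α := ℝ), i.cast_nonneg (α := ℝ)]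
  have htail := norm_tail_le hA hc hK (i := i)
    (fun a ha => h.norm_cf_E_le hT hC hA (ih a (by omega))) (fun b hb => ih b (by omega)) m k
  have hTψ := hT.norm_cf_le_growthSucc hC hA hc (ih i (by omega)) hm k
  calc ‖cf m (i + 1) k ψ‖
      ≤ ‖(m : ℂ) - n‖ * ‖cf m (i + 1) k ψ‖ :=
        le_mul_of_one_le_left (norm_nonneg _) (one_le_norm_natCast_sub hmn)
    _ = ‖tail E ψ m i k - cf m i k (substOps P ψ)‖ := by
        rw [← norm_mul, h.sub_mul_cf_psi_succ m i k hmn]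
    _ ≤ 64 * bandConst L C * growthSucc (65 * bandConst L C) (n + L + 1) i k +
          bandConst L C * growthSucc (65 * bandConst L C) (n + L + 1) i k :=
        (norm_sub_le _ _).trans (add_le_add htail hTψ)
    _ = 65 * bandConst L C * growthSucc (65 * bandConst L C) (n + L + 1) i k := by ring

end RSRecursion

/-! ### The Borel transform -/

open Nat in
lemma cf_hborel (f : Series) (m i k : ℕ) :
    cf m i k (hborel 2 f) = (k ! : ℂ)⁻¹ * cf m i (k + 1) f := by
  simp [cf, hborel, single_eq_mon, mon_add]

lemma cf_hfree (f : Series) (m i k : ℕ) :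
    cf m i k (hfree 2 f) = if k = 0 then cf m i k f else 0 := by
  by_cases hk : k = 0 <;> simp [cf, hfree, hk]

lemma isConv_of_norm_cf_le {f : Series} {C R : ℝ} (hR : 0 < R)
    (h : ∀ m i k, ‖cf m i k f‖ ≤ C * R ^ (m + i + k)) : IsConv f :=
  ⟨C, R, hR, fun d => by rw [coeff_eq_cf, degOf_eq]; exact h _ _ _⟩

lemma growthSucc_le {A c : ℝ} (hA : 0 ≤ A) (hc : 0 ≤ c) (i k : ℕ) :
    growthSucc A c i k ≤ A ^ i * c ^ k * ((i : ℝ) + 2) ^ k := by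
  have := wt_le_one (i + 1); have := wt_le_one k; have := wt_pos (i + 1); have := wt_pos k
  rw [growthSucc, mul_assoc]
  exact mul_le_of_le_one_right (by positivity) (by nlinarith)

namespace RSRecursion

variable {P : FreeAlgebra ℂ (Fin 2)} {n : ℕ} {E ψ : Series}

lemma coeff_E_of_t_zero (h : RSRecursion P n E ψ) (d : Fin 3 →₀ ℕ) (hd : d 1 = 0) :
    coeff d E = if d = Finsupp.single 2 1 then (n : ℂ) else 0 := by
  rw [coeff_eq_cf, hd]
  simp only [eq_single_iff, hd]
  rcases hm : d 0 with _ | m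
  · simp [h.cf_E_zero]
  · simp [DependsOnlyOn.cf_succ h.dependsOnlyOn]

lemma isConv_hfree (h : RSRecursion P n E ψ) : IsConv (hfree 2 E) := by
  refine isConv_of_norm_cf_le (C := 0) one_pos fun m i k => ?_
  rw [cf_hfree]
  split_ifs with hk
  · rcases m with _ | m
    · simp [hk, h.cf_E_hfree]
    · simp [DependsOnlyOn.cf_succ h.dependsOnlyOn]
  · simp

lemma pow_le_factorial_mul_exp (i k : ℕ) :
    ((i : ℝ) + 2) ^ k ≤ k.factorial * Real.exp 1 ^ (i + 2) := by
  have := Real.pow_div_factorial_le_exp (x := (i : ℝ) + 2) (by positivity) k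
  rw [div_le_iff₀ (by exact_mod_cast k.factorial_pos)] at this
  rw [← Real.exp_nat_mul, mul_comm]
  push_cast
  rwa [mul_one]

lemma norm_inv_factorial_mul_le {x : ℂ} {K A c : ℝ} (hK : 0 ≤ K) (hA : 0 ≤ A) (hc : 0 ≤ c)
    {i k : ℕ} (hx : ‖x‖ ≤ K * (A ^ i * c ^ k * ((i : ℝ) + 2) ^ k)) :
    ‖(k.factorial : ℂ)⁻¹ * x‖ ≤ K * Real.exp 1 ^ 2 * ((A * Real.exp 1) ^ i * c ^ k) := by
  have hfact : (0 : ℝ) < k.factorial := by exact_mod_cast k.factorial_pos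
  calc ‖(k.factorial : ℂ)⁻¹ * x‖ = ‖x‖ / k.factorial := by
        rw [norm_mul, norm_inv, Complex.norm_natCast, inv_mul_eq_div]
    _ ≤ K * (A ^ i * c ^ k * (k.factorial * Real.exp 1 ^ (i + 2))) / k.factorial := by
        gcongr; exact hx.trans (by gcongr; exact pow_le_factorial_mul_exp i k)
    _ = K * Real.exp 1 ^ 2 * ((A * Real.exp 1) ^ i * c ^ k) := by
        field_simp; ring

lemma isConv_hborel (h : RSRecursion P n E ψ) : IsConv (hborel 2 E) := by
  obtain ⟨L, C, hC, hT⟩ := isBanded_substOps P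
  set K := bandConst L C
  set A := 65 * K
  set c : ℝ := n + L + 1
  have hK : 0 ≤ K := by simp only [K, bandConst]; positivity
  have hA : 0 ≤ A := by positivity
  have hc : 1 ≤ c := by simp only [c]; linarith [n.cast_nonneg (α := ℝ), L.cast_nonneg (α := ℝ)]
  set R := max (A * Real.exp 1) c
  have hR : 1 ≤ R := hc.trans (le_max_right _ _)
  have hE : ∀ i k, ‖cf 0 (i + 1) (k + 1) E‖ ≤ K * (A ^ i * c ^ k * ((i : ℝ) + 2) ^ k) :=
    fun i k => (h.norm_cf_E_le hT hC hA (h.norm_cf_psi_le hT hC i) k).trans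
      (mul_le_mul_of_nonneg_left (growthSucc_le hA (by linarith) i k) hK)
  have hKe : 0 ≤ K * Real.exp 1 ^ 2 := by positivity
  refine isConv_of_norm_cf_le (C := n + K * Real.exp 1 ^ 2) (R := R) (by linarith)
    fun m i k => ?_
  rw [cf_hborel]
  rcases m with _ | m
  swap
  · rw [DependsOnlyOn.cf_succ h.dependsOnlyOn, mul_zero, norm_zero]
    positivity
  rcases i with _ | i
  · rw [h.cf_E_zero]
    split_ifs with hk
    · obtain rfl : k = 0 := by omega
      simp only [Nat.factorial_zero, Nat.cast_one, inv_one, one_mul, Complex.norm_natCast,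
        pow_zero, add_zero, mul_one]
      linarith
    · rw [mul_zero, norm_zero]
      positivity
  calc ‖(k.factorial : ℂ)⁻¹ * cf 0 (i + 1) (k + 1) E‖
      ≤ K * Real.exp 1 ^ 2 * ((A * Real.exp 1) ^ i * c ^ k) :=
        norm_inv_factorial_mul_le hK hA (by linarith) (hE i k)
    _ ≤ K * Real.exp 1 ^ 2 * (R ^ i * R ^ k) := by
        gcongr
        exacts [le_max_left _ _, le_max_right _ _]
    _ ≤ (n + K * Real.exp 1 ^ 2) * R ^ (0 + (i + 1) + k) := by
        rw [← pow_add]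
        exact mul_le_mul (by linarith [n.cast_nonneg (α := ℝ)]) (pow_le_pow_right₀ hR (by omega))
          (by positivity) (by positivity)

theorem borelAnalytic (h : RSRecursion P n E ψ) : BorelAnalytic 2 E :=
  ⟨h.isConv_hborel, h.isConv_hfree⟩

end RSRecursion

end RayleighSchrodinger

end

/-- **Gevrey convergence of the Rayleigh–Schrödinger expansions** for polynomial
perturbations `H_t = a†a + ℏtP(a,a†)` of the harmonic oscillator: for every `n` there
are a unique eigenvalue `E ∈ ℂ[[t,ℏ]]` and a unique normalized eigenvector
`ψ ∈ ℂ[[z,t,ℏ]]` with `ψ|_{t=0} = zⁿ`; moreover `E|_{t=0} = nℏ` and `E` is of Gevrey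
class in `ℏ`: its `ℏ`-Borel transform and its `ℏ`-free part are convergent in a
neighbourhood of `0 ∈ ℂ²`. -/
theorem rayleigh_schrodinger_gevrey (P : FreeAlgebra ℂ (Fin 2)) (n : ℕ) :
    (∃! p : MvPowerSeries (Fin 3) ℂ × MvPowerSeries (Fin 3) ℂ, RSCond P n p) ∧
    ∀ p : MvPowerSeries (Fin 3) ℂ × MvPowerSeries (Fin 3) ℂ, RSCond P n p →
      (∀ d : Fin 3 →₀ ℕ, d 1 = 0 →
        MvPowerSeries.coeff (R := ℂ) d p.1 =
          if d = Finsupp.single 2 1 then (n : ℂ) else 0) ∧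
      BorelAnalytic 2 p.1 := by
  have hsol := RayleighSchrodinger.rsRecursion_sol P n
  refine ⟨⟨(RayleighSchrodinger.eSol P n, RayleighSchrodinger.psiSol P n),
    RayleighSchrodinger.rsCond_iff.mpr hsol, fun ⟨E, ψ⟩ hp => ?_⟩,
    fun ⟨E, ψ⟩ hp => ?_⟩
  · have h := RayleighSchrodinger.rsCond_iff.mp hp
    have hψ := h.psi_eq hsol
    subst hψ
    rw [h.E_eq hsol]
  · have h := RayleighSchrodinger.rsCond_iff.mp hp
    exact ⟨h.coeff_E_of_t_zero, h.borelAnalytic⟩
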